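/- An array L of n−1 integers is a valid LCP array for some terminated string over the binary alphabet {a,b} (plus terminator $) if and only if L, prefixed by one additional 0, has at most two zero entries in total and is a valid LCP array of a terminated string over an unbounded alphabet — equivalently: L is a yes-instance of BTSILA iff it has a leading zero and at most one other zero, and it is a yes-instance of TSILA. -/

import Mathlib

namespace SILA

/-- Length of the longest common prefix of two finite strings. -/
def listLcpLen : List ℕ → List ℕ → ℕ
  | a :: as, b :: bs => if a = b then listLcpLen as bs + 1 else 0
  | _, _ => 0

/-- `Y` is a terminated string over the alphabet `{1, 2, 3, …}` (of unbounded
size), with the terminator `$ = 0` occurring exactly at the last position. -/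
def IsTerminated (Y : List ℕ) : Prop :=
  Y ≠ [] ∧ ∀ (i : ℕ) (h : i < Y.length), Y.get ⟨i, h⟩ = 0 ↔ i = Y.length - 1

/-- `L[1..n)` is the LCP array of the terminated string `Y` of length `n`:
some permutation `ρ` sorts the (non-cyclic) suffixes of `Y` lexicographically,
and `L r` is the LCP length of the suffixes of ranks `r-1` and `r`. -/
def IsLCPofTerminated (n : ℕ) (L : ℕ → ℕ) (Y : List ℕ) : Prop :=
  Y.length = n ∧ IsTerminated Y ∧
  ∃ ρ : Equiv.Perm (Fin n),
    (∀ r r' : Fin n, r ≤ r' →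
      (Y.drop (ρ r).val = Y.drop (ρ r').val ∨
       List.Lex (· < ·) (Y.drop (ρ r).val) (Y.drop (ρ r').val))) ∧
    ∀ (r : ℕ) (h1 : 0 < r) (h2 : r < n),
      L r = listLcpLen (Y.drop (ρ ⟨r - 1, by omega⟩).val) (Y.drop (ρ ⟨r, h2⟩).val)


/-!
The first letters of the sorted suffixes form a monotone sequence starting with `$`, and the
LCP value at rank `r` vanishes exactly where this sequence increases. Hence the LCP array has
one zero fewer than the string has distinct letters: a binary string gives at most two zeros.
Conversely, if there are at most two zeros the string has at most three letters, and replacing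
each letter by its rank among the letters of the string keeps the suffix order, the LCP values
and the terminator, and makes the string binary.
-/

open Finset

lemma listLcpLen_cons_eq_zero_iff {a b : ℕ} {as bs : List ℕ} :
    listLcpLen (a :: as) (b :: bs) = 0 ↔ a ≠ b := by
  simp [listLcpLen]

lemma listLcpLen_map {f : ℕ → ℕ} :
    ∀ {a b : List ℕ}, (∀ x ∈ a, ∀ y ∈ b, f x = f y → x = y) →
      listLcpLen (a.map f) (b.map f) = listLcpLen a b
  | x :: xs, y :: ys, hf => by
    have ih := listLcpLen_map (a := xs) (b := ys)
      fun x' hx' y' hy' => hf x' (by simp [hx']) y' (by simp [hy'])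
    by_cases hxy : x = y
    · simp [listLcpLen, hxy, ih]
    · have : f x ≠ f y := fun h => hxy (hf x (by simp) y (by simp) h)
      simp [listLcpLen, hxy, this]
  | [], _, _ | _ :: _, [], _ => by simp [listLcpLen]

lemma lex_map_of_rel {r s : ℕ → ℕ → Prop} {f : ℕ → ℕ} {a b : List ℕ}
    (h : List.Lex r a b) (hf : ∀ x ∈ a, ∀ y ∈ b, r x y → s (f x) (f y)) :
    List.Lex s (a.map f) (b.map f) := by
  induction h with
  | nil => exact List.Lex.nil
  | rel hxy => exact List.Lex.rel (hf _ (by simp) _ (by simp) hxy)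
  | cons _ ih =>
    exact List.Lex.cons (ih fun x hx y hy => hf x (by simp [hx]) y (by simp [hy]))

theorem card_image_range_eq_card_filter_lt_add_one {α : Type*} [LinearOrder α] {g : ℕ → α}
    {n : ℕ} (hn : 0 < n) (hg : MonotoneOn g (Set.Iio n)) :
    #((range n).image g) = #{r ∈ Ico 1 n | g (r - 1) < g r} + 1 := by
  induction n, hn using Nat.le_induction with
  | base => simp
  | succ n hn ih =>
    have hg' : MonotoneOn g (Set.Iio n) := hg.mono (Set.Iio_subset_Iio (by omega))
    have hnew : g n ∉ (range n).image g ↔ g (n - 1) < g n := by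
      have hle : g (n - 1) ≤ g n := hg (by simp) (by simp) (by omega)
      simp only [mem_image, mem_range, not_exists, not_and]
      refine ⟨fun h => lt_of_le_of_ne hle (h (n - 1) (by omega)), fun h k hk hkn => ?_⟩
      have := hg (by simp; omega) (by simp) (show k ≤ n - 1 by omega)
      exact absurd (hkn ▸ this) (not_le.2 h)
    rw [range_add_one, image_insert, Nat.Ico_succ_right_eq_insert_Ico hn, filter_insert]
    by_cases hinc : g (n - 1) < g n
    · rw [card_insert_of_notMem (hnew.2 hinc), if_pos hinc,
        card_insert_of_notMem (by simp), ih hg']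
    · rw [card_insert_of_mem (not_not.1 (mt hnew.1 hinc)), if_neg hinc, ih hg']

def rankIn (T : Finset ℕ) (c : ℕ) : ℕ := #{x ∈ T | x < c}

lemma strictMonoOn_rankIn (T : Finset ℕ) : StrictMonoOn (rankIn T) T := by
  intro a ha b _ hab
  refine card_lt_card
    ⟨monotone_filter_right _ fun x _ (hx : x < a) => hx.trans hab, fun hsub => ?_⟩
  simpa using (mem_filter.1 (hsub (mem_filter.2 ⟨ha, hab⟩))).2

lemma rankIn_zero (T : Finset ℕ) : rankIn T 0 = 0 := by
  simp [rankIn]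

lemma rankIn_lt_card {T : Finset ℕ} {c : ℕ} (hc : c ∈ T) : rankIn T c < #T :=
  card_lt_card (filter_ssubset.2 ⟨c, hc, lt_irrefl c⟩)

def SortsSuffixes {n : ℕ} (Y : List ℕ) (ρ : Equiv.Perm (Fin n)) : Prop :=
  ∀ r r' : Fin n, r ≤ r' →
    (Y.drop (ρ r).val = Y.drop (ρ r').val ∨
     List.Lex (· < ·) (Y.drop (ρ r).val) (Y.drop (ρ r').val))

def headAtRank {n : ℕ} (Y : List ℕ) (ρ : Equiv.Perm (Fin n)) (r : ℕ) : ℕ :=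
  if h : r < n then Y.getD (ρ ⟨r, h⟩) 0 else 0

section SortedSuffixes

variable {n : ℕ} {Y : List ℕ} {ρ : Equiv.Perm (Fin n)}

lemma headAtRank_eq_getElem (hlen : Y.length = n) {r : ℕ} (hr : r < n) :
    headAtRank Y ρ r = Y[(ρ ⟨r, hr⟩ : ℕ)]'((ρ _).isLt.trans_eq hlen.symm) := by
  rw [headAtRank, dif_pos hr, List.getD_eq_getElem]

lemma drop_eq_headAtRank_cons (hlen : Y.length = n) {r : ℕ} (hr : r < n) :
    Y.drop (ρ ⟨r, hr⟩) = headAtRank Y ρ r :: Y.drop (ρ ⟨r, hr⟩ + 1) := by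
  rw [headAtRank_eq_getElem hlen hr, ← List.drop_eq_getElem_cons]

lemma headAtRank_eq_zero_iff_eq_last (hlen : Y.length = n) (hterm : IsTerminated Y) {r : ℕ}
    (hr : r < n) : headAtRank Y ρ r = 0 ↔ (ρ ⟨r, hr⟩ : ℕ) = n - 1 := by
  simpa [headAtRank_eq_getElem hlen hr, hlen] using hterm.2 _ ((ρ _).isLt.trans_eq hlen.symm)

lemma image_headAtRank (hlen : Y.length = n) : (range n).image (headAtRank Y ρ) = Y.toFinset := by
  ext c
  simp only [mem_image, mem_range, List.mem_toFinset, List.mem_iff_getElem]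
  constructor
  · rintro ⟨r, hr, rfl⟩
    exact ⟨_, _, (headAtRank_eq_getElem hlen hr).symm⟩
  · rintro ⟨i, hi, rfl⟩
    refine ⟨ρ.symm ⟨i, hlen ▸ hi⟩, (ρ.symm _).isLt, ?_⟩
    simp [headAtRank_eq_getElem hlen]

variable (hlen : Y.length = n) (hsort : SortsSuffixes Y ρ)
include hlen hsort

lemma monotoneOn_headAtRank : MonotoneOn (headAtRank Y ρ) (Set.Iio n) := by
  intro r hr r' hr' hrr'
  have hs := hsort ⟨r, hr⟩ ⟨r', hr'⟩ hrr'
  rw [drop_eq_headAtRank_cons hlen hr, drop_eq_headAtRank_cons hlen hr'] at hs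
  rcases hs with heq | hlex
  · exact (List.cons.inj heq).1.le
  · rcases List.cons_lex_cons_iff.1 hlex with hlt | ⟨heq, -⟩
    · exact hlt.le
    · exact heq.le

lemma listLcpLen_drop_eq_zero_iff {r : ℕ} (h1 : 0 < r) (h2 : r < n) :
    listLcpLen (Y.drop (ρ ⟨r - 1, by omega⟩)) (Y.drop (ρ ⟨r, h2⟩)) = 0 ↔
      headAtRank Y ρ (r - 1) < headAtRank Y ρ r := by
  rw [drop_eq_headAtRank_cons hlen, drop_eq_headAtRank_cons hlen, listLcpLen_cons_eq_zero_iff,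
    ((monotoneOn_headAtRank hlen hsort) (by simp; omega) (by simpa) (by omega)).lt_iff_ne]

-- `$` starts only the suffix `[$]`, which is the least suffix.
lemma headAtRank_eq_zero_iff (hterm : IsTerminated Y) {r : ℕ} (hr : r < n) :
    headAtRank Y ρ r = 0 ↔ r = 0 := by
  have hn : 0 < n := by omega
  have hlast : headAtRank Y ρ (ρ.symm ⟨n - 1, by omega⟩) = 0 :=
    (headAtRank_eq_zero_iff_eq_last hlen hterm (ρ.symm _).isLt).2 (by simp)
  have hfirst : (ρ ⟨0, hn⟩ : ℕ) = n - 1 := by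
    refine (headAtRank_eq_zero_iff_eq_last hlen hterm hn).1 (Nat.eq_zero_of_le_zero ?_)
    exact (monotoneOn_headAtRank hlen hsort (by simpa) (by simp) (Nat.zero_le _)).trans_eq hlast
  rw [headAtRank_eq_zero_iff_eq_last hlen hterm hr, ← hfirst, Fin.val_inj, ρ.injective.eq_iff,
    Fin.mk.injEq]

end SortedSuffixes

namespace IsTerminated

variable {Y : List ℕ}

lemma zero_mem (h : IsTerminated Y) : 0 ∈ Y := by
  have hlast : Y.length - 1 < Y.length := Nat.sub_one_lt (List.length_pos_iff.2 h.1).ne'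
  exact (h.2 _ hlast).2 rfl ▸ List.get_mem Y ⟨_, hlast⟩

lemma map (h : IsTerminated Y) {f : ℕ → ℕ} (hf : ∀ c ∈ Y, f c = 0 ↔ c = 0) :
    IsTerminated (Y.map f) := by
  refine ⟨by simpa using h.1, fun i hi => ?_⟩
  have hiY : i < Y.length := by simpa using hi
  simpa [hf _ (List.getElem_mem hiY)] using h.2 i hiY

end IsTerminated

namespace IsLCPofTerminated

variable {n : ℕ} {L : ℕ → ℕ} {Y : List ℕ}

theorem lcp_one_eq_zero (h : IsLCPofTerminated n L Y) (hn : 2 ≤ n) : L 1 = 0 := by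
  obtain ⟨hlen, hterm, ρ, hsort, hL⟩ := h
  rw [hL 1 one_pos hn, listLcpLen_drop_eq_zero_iff hlen hsort one_pos hn, Nat.sub_self,
    (headAtRank_eq_zero_iff hlen hsort hterm (by omega)).2 rfl, Nat.pos_iff_ne_zero,
    Ne, headAtRank_eq_zero_iff hlen hsort hterm hn]
  exact one_ne_zero

-- Zeros of the LCP array are exactly the rank boundaries between different first letters.
theorem card_filter_eq_zero_add_one (h : IsLCPofTerminated n L Y) :
    #{r ∈ Ico 1 n | L r = 0} + 1 = #Y.toFinset := by
  obtain ⟨hlen, hterm, ρ, hsort, hL⟩ := h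
  have hn : 0 < n := hlen ▸ List.length_pos_iff.2 hterm.1
  rw [← image_headAtRank hlen,
    card_image_range_eq_card_filter_lt_add_one hn (monotoneOn_headAtRank hlen hsort)]
  congr 2
  refine filter_congr fun r hr => ?_
  obtain ⟨h1, h2⟩ := mem_Ico.1 hr
  rw [hL r h1 h2, listLcpLen_drop_eq_zero_iff hlen hsort h1 h2]

theorem map (h : IsLCPofTerminated n L Y) {f : ℕ → ℕ} (hf : StrictMonoOn f {c | c ∈ Y})
    (hf0 : f 0 = 0) : IsLCPofTerminated n L (Y.map f) := by
  obtain ⟨hlen, hterm, ρ, hsort, hL⟩ := h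
  refine ⟨by simpa using hlen, hterm.map fun c hc => ?_, ρ, fun r r' hrr' => ?_,
    fun r h1 h2 => ?_⟩
  · refine ⟨fun hfc => by_contra fun hc0 => ?_, fun hc0 => hc0 ▸ hf0⟩
    exact (hf hterm.zero_mem hc (Nat.pos_of_ne_zero hc0)).ne' (hfc.trans hf0.symm)
  · rw [← List.map_drop, ← List.map_drop]
    exact (hsort r r' hrr').imp (congrArg _) fun hlex =>
      lex_map_of_rel hlex fun x hx y hy => hf (List.mem_of_mem_drop hx) (List.mem_of_mem_drop hy)
  · rw [← List.map_drop, ← List.map_drop, hL r h1 h2]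
    exact (listLcpLen_map fun x hx y hy =>
      hf.injOn (List.mem_of_mem_drop hx) (List.mem_of_mem_drop hy)).symm

end IsLCPofTerminated

theorem BTSILA_iff_TSILA (n : ℕ) (hn : 2 ≤ n) (L : ℕ → ℕ) :
    (∃ Y : List ℕ, IsLCPofTerminated n L Y ∧ ∀ c ∈ Y, c ≤ 2) ↔
    (L 1 = 0 ∧ ((Finset.Ico 1 n).filter (fun r => L r = 0)).card ≤ 2 ∧
      ∃ Y : List ℕ, IsLCPofTerminated n L Y) := by
  constructor
  · rintro ⟨Y, hY, hbin⟩
    have hletters : #Y.toFinset ≤ #(range 3) :=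
      card_le_card fun c hc => mem_range.2 (Nat.lt_succ_of_le (hbin c (List.mem_toFinset.1 hc)))
    have hzeros := hY.card_filter_eq_zero_add_one
    rw [card_range] at hletters
    exact ⟨hY.lcp_one_eq_zero hn, by omega, Y, hY⟩
  · rintro ⟨-, hzeros, Y, hY⟩
    refine ⟨Y.map (rankIn Y.toFinset), hY.map ?_ (rankIn_zero _), fun c hc => ?_⟩
    · simpa using strictMonoOn_rankIn Y.toFinset
    · obtain ⟨a, ha, rfl⟩ := List.mem_map.1 hc
      have hrank := rankIn_lt_card (List.mem_toFinset.2 ha)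
      have hletters := hY.card_filter_eq_zero_add_one
      omega

end SILA
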